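/- arXiv:2509.00383 — 2 statements merged into one kernel-verified Lean document; each statement's English description precedes it below -/
import Mathlib

section
/- Let G be a connected graph with minimum degree at least 2, let r be a vertex of G, and let F be a good edge set with respect to r. Then the set S consisting of r and all endpoints of edges of F is an edge resolving set of G: for any two distinct edges e, f of G there exists s ∈ S with dist(s,e) ≠ dist(s,f). -/
open SimpleGraph

variable {V : Type*}

/-- `B_r(u)`: the set of edges `uv` with `dist(u,r) = dist(v,r) + 1`. -/
def brSet (G : SimpleGraph V) (r u : V) : Set (Sym2 V) :=
  {e | ∃ v : V, e = s(u, v) ∧ G.Adj u v ∧ G.dist u r = G.dist v r + 1}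

/-- `F` is a good edge set with respect to the root `r`: it contains all horizontal
edges and, for every `u ≠ r`, exactly `|B_r(u)| - 1` edges of `B_r(u)`. -/
def IsGoodEdgeSet (G : SimpleGraph V) (r : V) (F : Set (Sym2 V)) : Prop :=
  F ⊆ G.edgeSet ∧
  (∀ u v : V, G.Adj u v → G.dist u r = G.dist v r → s(u, v) ∈ F) ∧
  (∀ u : V, u ≠ r → (brSet G r u ∩ F).ncard = (brSet G r u).ncard - 1)

/-- Cyclomatic number `m - n + 1` of a connected graph (written `m + 1 - n`
to be correct in `ℕ`). -/
noncomputable def cyclomatic [Fintype V] (G : SimpleGraph V) : ℕ :=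
  G.edgeSet.ncard + 1 - Fintype.card V

/-- Number of leaves (degree-1 vertices). -/
noncomputable def numLeaves (G : SimpleGraph V) : ℕ :=
  {v : V | (G.neighborSet v).ncard = 1}.ncard

/-- Distance from a vertex to an edge: minimum over the two endpoints. -/
noncomputable def edgeDist (G : SimpleGraph V) (v : V) : Sym2 V → ℕ :=
  Sym2.lift ⟨fun a b => min (G.dist v a) (G.dist v b), fun a b => min_comm _ _⟩

def IsResolving (G : SimpleGraph V) (S : Set V) : Prop :=
  ∀ x y : V, x ≠ y → ∃ s ∈ S, G.dist s x ≠ G.dist s y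

def IsEdgeResolving (G : SimpleGraph V) (S : Set V) : Prop :=
  ∀ e ∈ G.edgeSet, ∀ f ∈ G.edgeSet, e ≠ f → ∃ s ∈ S, edgeDist G s e ≠ edgeDist G s f

/-- Distance from a vertex to a mixed element (vertex or edge). -/
noncomputable def mixedDist (G : SimpleGraph V) (s : V) : V ⊕ Sym2 V → ℕ
  | Sum.inl v => G.dist s v
  | Sum.inr e => edgeDist G s e

/-- Membership in `V(G) ∪ E(G)`. -/
def IsMixedElem (G : SimpleGraph V) : V ⊕ Sym2 V → Prop
  | Sum.inl _ => True
  | Sum.inr e => e ∈ G.edgeSet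

def IsMixedResolving (G : SimpleGraph V) (S : Set V) : Prop :=
  ∀ x y : V ⊕ Sym2 V, IsMixedElem G x → IsMixedElem G y → x ≠ y →
    ∃ s ∈ S, mixedDist G s x ≠ mixedDist G s y

noncomputable def metricDim (G : SimpleGraph V) : ℕ :=
  sInf {k | ∃ S : Set V, IsResolving G S ∧ S.ncard = k}

noncomputable def edgeMetricDim (G : SimpleGraph V) : ℕ :=
  sInf {k | ∃ S : Set V, IsEdgeResolving G S ∧ S.ncard = k}

noncomputable def mixedMetricDim (G : SimpleGraph V) : ℕ :=
  sInf {k | ∃ S : Set V, IsMixedResolving G S ∧ S.ncard = k}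

/-- `v` is a cut-vertex: removing it disconnects the graph. -/
def IsCutVertex (G : SimpleGraph V) (v : V) : Prop :=
  ¬ (G.induce {u : V | u ≠ v}).Connected

/-- The set of endpoints of a set of edges. -/
def endpoints (F : Set (Sym2 V)) : Set V := {v | ∃ e ∈ F, v ∈ e}

def IsGeodetic (G : SimpleGraph V) (S : Set V) : Prop :=
  ∀ v : V, ∃ x ∈ S, ∃ y ∈ S, ∃ p : G.Walk x y,
    p.IsPath ∧ p.length = G.dist x y ∧ v ∈ p.support

noncomputable def geodeticNumber (G : SimpleGraph V) : ℕ :=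
  sInf {k | ∃ S : Set V, IsGeodetic G S ∧ S.ncard = k}

/-- Monitoring edge-geodetic set: every edge lies on all shortest paths between
some two vertices of `S`. -/
def IsMEG (G : SimpleGraph V) (S : Set V) : Prop :=
  ∀ e ∈ G.edgeSet, ∃ x ∈ S, ∃ y ∈ S,
    ∀ p : G.Walk x y, p.length = G.dist x y → e ∈ p.edges

noncomputable def megNumber (G : SimpleGraph V) : ℕ :=
  sInf {k | ∃ S : Set V, IsMEG G S ∧ S.ncard = k}

/-- Distance-edge-monitoring set. -/
def IsDEM (G : SimpleGraph V) (S : Set V) : Prop :=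
  ∀ e ∈ G.edgeSet, ∃ x ∈ S, ∃ y : V,
    ∀ p : G.Walk x y, p.length = G.dist x y → e ∈ p.edges

noncomputable def demNumber (G : SimpleGraph V) : ℕ :=
  sInf {k | ∃ S : Set V, IsDEM G S ∧ S.ncard = k}


section StmtFiveAux

variable {V : Type*}

private lemma sym2_mk_ne' {w a b : V} (hwa : a ≠ w) (hne : a ≠ b) :
    s(w, a) ≠ s(w, b) := by
  intro h
  rcases Sym2.eq_iff.mp h with ⟨-, h2⟩ | ⟨-, h2⟩
  · exact hne h2
  · exact hwa h2

private lemma mem_of_ncard_inter {B F : Set (Sym2 V)} (hfin : B.Finite)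
    {e1 e2 : Sym2 V} (h1 : e1 ∈ B) (h2 : e2 ∈ B) (hne : e1 ≠ e2)
    (hcard : (B ∩ F).ncard = B.ncard - 1) : e1 ∈ F ∨ e2 ∈ F := by
  by_contra hn
  push_neg at hn
  have hsub : B ∩ F ⊆ B \ {e1, e2} := by
    rintro x ⟨hxB, hxF⟩
    refine ⟨hxB, ?_⟩
    rintro (rfl | rfl)
    · exact hn.1 hxF
    · exact hn.2 hxF
  have hle : (B ∩ F).ncard ≤ (B \ {e1, e2}).ncard :=
    Set.ncard_le_ncard hsub hfin.diff
  have hpair : ({e1, e2} : Set (Sym2 V)) ⊆ B := by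
    rintro x (rfl | rfl) <;> assumption
  have hdiff : (B \ {e1, e2}).ncard = B.ncard - 2 := by
    rw [Set.ncard_diff hpair (Set.toFinite _), Set.ncard_pair hne]
  have h2le : 2 ≤ B.ncard := by
    have := Set.ncard_le_ncard hpair hfin
    rwa [Set.ncard_pair hne] at this
  omega

private lemma exists_adj_dist {G : SimpleGraph V} (hG : G.Connected) {w x : V} {n : ℕ}
    (h : G.dist w x = n + 1) : ∃ a, G.Adj w a ∧ G.dist a x = n := by
  obtain ⟨p, hp⟩ := (hG w x).exists_walk_length_eq_dist
  rw [h] at hp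
  cases p with
  | nil => simp at hp
  | cons hadj q =>
    rename_i v
    refine ⟨v, hadj, le_antisymm ?_ ?_⟩
    · have := SimpleGraph.dist_le q
      rw [SimpleGraph.Walk.length_cons] at hp
      omega
    · have h1 : G.dist w v = 1 := SimpleGraph.dist_eq_one_iff_adj.mpr hadj
      have h2 := hG.dist_triangle (u := w) (v := v) (w := x)
      omega

private lemma dist_lt_card' [Fintype V] {G : SimpleGraph V} (hG : G.Connected) (u v : V) :
    G.dist u v < Fintype.card V := by
  classical
  obtain ⟨p, hp⟩ := (hG u v).exists_walk_length_eq_dist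
  have h1 := SimpleGraph.dist_le p.bypass
  have h2 := p.bypass_isPath.length_lt
  omega

private lemma up_neighbor [Fintype V] {G : SimpleGraph V} (hG : G.Connected)
    (hδ : ∀ v : V, 2 ≤ (G.neighborSet v).ncard) {r : V} {F : Set (Sym2 V)}
    (hF : IsGoodEdgeSet G r F) {w : V} (hwr : w ≠ r)
    (hwS : w ∉ ({r} : Set V) ∪ endpoints F) :
    ∃ z, G.Adj w z ∧ G.dist z r = G.dist w r + 1 := by
  have hnotend : ∀ e ∈ F, w ∉ e := fun e heF hwe => hwS (Or.inr ⟨e, heF, hwe⟩)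
  have hhor : ∀ v, G.Adj w v → G.dist w r ≠ G.dist v r := by
    intro v hv heq
    exact hnotend _ (hF.2.1 w v hv heq) (Sym2.mem_mk_left w v)
  have hBF : brSet G r w ∩ F = ∅ := by
    ext e
    simp only [Set.mem_inter_iff, Set.mem_empty_iff_false, iff_false, not_and]
    rintro ⟨v, rfl, -, -⟩ heF
    exact hnotend _ heF (Sym2.mem_mk_left w v)
  have hB1 : (brSet G r w).ncard ≤ 1 := by
    have h := hF.2.2 w hwr
    rw [hBF, Set.ncard_empty] at h
    omega
  have hud : ∀ v, G.Adj w v → G.dist v r = G.dist w r + 1 ∨ G.dist v r + 1 = G.dist w r := by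
    intro v hv
    have h1 : G.dist w v = 1 := SimpleGraph.dist_eq_one_iff_adj.mpr hv
    have h2 := hG.dist_triangle (u := w) (v := v) (w := r)
    have h3 := hG.dist_triangle (u := v) (v := w) (w := r)
    have h4 : G.dist v w = 1 := by rw [SimpleGraph.dist_comm]; exact h1
    have h5 := hhor v hv
    omega
  have hδ2 : 1 < (G.neighborSet w).ncard := by have := hδ w; omega
  obtain ⟨v1, v2, h1m, h2m, hv12⟩ := (Set.one_lt_ncard_iff (Set.toFinite _)).mp hδ2
  have hdown : ¬ (G.dist v1 r + 1 = G.dist w r ∧ G.dist v2 r + 1 = G.dist w r) := by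
    rintro ⟨hd1, hd2⟩
    have m1 : s(w, v1) ∈ brSet G r w := ⟨v1, rfl, h1m, hd1.symm⟩
    have m2 : s(w, v2) ∈ brSet G r w := ⟨v2, rfl, h2m, hd2.symm⟩
    have hne : s(w, v1) ≠ s(w, v2) :=
      sym2_mk_ne' (G.ne_of_adj h1m).symm hv12
    have hsub : ({s(w, v1), s(w, v2)} : Set (Sym2 V)) ⊆ brSet G r w := by
      rintro x (rfl | rfl) <;> assumption
    have h2le := Set.ncard_le_ncard hsub (Set.toFinite _)
    rw [Set.ncard_pair hne] at h2le
    omega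
  rcases hud v1 h1m with hup | hdn1
  · exact ⟨v1, h1m, hup⟩
  rcases hud v2 h2m with hup | hdn2
  · exact ⟨v2, h2m, hup⟩
  exact absurd ⟨hdn1, hdn2⟩ hdown

private lemma resolve_min {G : SimpleGraph V} (hG : G.Connected) {a b c d x : V}
    (hx : x = a ∨ x = b) (hxc : x ≠ c) (hxd : x ≠ d)
    (heq : min (G.dist x a) (G.dist x b) = min (G.dist x c) (G.dist x d)) : False := by
  have h0 : min (G.dist x a) (G.dist x b) = 0 := by
    rcases hx with rfl | rfl <;> simp [SimpleGraph.dist_self]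
  have hc := hG.pos_dist_of_ne hxc
  have hd := hG.pos_dist_of_ne hxd
  omega

private lemma horiz_case {G : SimpleGraph V} (hG : G.Connected) {r : V} {F : Set (Sym2 V)}
    (hF : IsGoodEdgeSet G r F) {a b c d : V} (hab : G.Adj a b)
    (hh : G.dist a r = G.dist b r) (hne : s(a, b) ≠ s(c, d))
    (hcon : ∀ s ∈ ({r} : Set V) ∪ endpoints F,
      min (G.dist s a) (G.dist s b) = min (G.dist s c) (G.dist s d)) : False := by
  have heF : s(a, b) ∈ F := hF.2.1 a b hab hh
  have haS : a ∈ ({r} : Set V) ∪ endpoints F := Or.inr ⟨_, heF, Sym2.mem_mk_left a b⟩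
  have hbS : b ∈ ({r} : Set V) ∪ endpoints F := Or.inr ⟨_, heF, Sym2.mem_mk_right a b⟩
  by_cases hac : a = c
  · have hbd : b ≠ d := fun h => hne (by rw [hac, h])
    have hbc : b ≠ c := by rw [← hac]; exact hab.ne'
    exact resolve_min hG (Or.inr rfl) hbc hbd (hcon b hbS)
  by_cases had : a = d
  · have hbc : b ≠ c := fun h => hne (by rw [had, h]; exact Sym2.eq_swap)
    have hbd : b ≠ d := by rw [← had]; exact hab.ne'
    exact resolve_min hG (Or.inr rfl) hbc hbd (hcon b hbS)
  exact resolve_min hG (Or.inl rfl) hac had (hcon a haS)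

private lemma descent_case [Fintype V] {G : SimpleGraph V} (hG : G.Connected)
    {r : V} {F : Set (Sym2 V)}
    (hF : IsGoodEdgeSet G r F) {a b c d : V}
    (hla : G.dist a r = G.dist b r + 1) (hlc : G.dist c r = G.dist d r + 1)
    (hbd : G.dist b r = G.dist d r) (hac : a ≠ c)
    (hcon : ∀ s ∈ ({r} : Set V) ∪ endpoints F,
      min (G.dist s a) (G.dist s b) = min (G.dist s c) (G.dist s d)) :
    ∀ n, ∀ w : V, G.dist w a = n → G.dist w c = n →
      G.dist w r = G.dist a r + n → False := by
  intro n
  induction n with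
  | zero =>
    intro w hwa hwc _
    have h1 : w = a := hG.dist_eq_zero_iff.mp hwa
    have h2 : w = c := hG.dist_eq_zero_iff.mp hwc
    exact hac (h1.symm.trans h2)
  | succ n ih =>
    intro w hwa hwc hwr
    obtain ⟨a', haa, ha'⟩ := exists_adj_dist hG hwa
    obtain ⟨c', hcc, hc'⟩ := exists_adj_dist hG hwc
    have hwa1 : G.dist w a' = 1 := SimpleGraph.dist_eq_one_iff_adj.mpr haa
    have hwc1 : G.dist w c' = 1 := SimpleGraph.dist_eq_one_iff_adj.mpr hcc
    have ta1 := hG.dist_triangle (u := w) (v := a') (w := r)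
    have ta2 := hG.dist_triangle (u := a') (v := a) (w := r)
    have tc1 := hG.dist_triangle (u := w) (v := c') (w := r)
    have tc2 := hG.dist_triangle (u := c') (v := c) (w := r)
    have hla' : G.dist a' r = G.dist a r + n := by omega
    have hlc' : G.dist c' r = G.dist a r + n := by omega
    by_cases hacc : a' = c'
    · rw [← hacc] at hc'
      exact ih a' ha' hc' hla'
    · have hwr0 : w ≠ r := by
        intro h
        rw [h, SimpleGraph.dist_self] at hwr
        omega
      have m1 : s(w, a') ∈ brSet G r w := ⟨a', rfl, haa, by omega⟩
      have m2 : s(w, c') ∈ brSet G r w := ⟨c', rfl, hcc, by omega⟩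
      have hnee : s(w, a') ≠ s(w, c') := sym2_mk_ne' haa.ne' hacc
      rcases mem_of_ncard_inter (Set.toFinite _) m1 m2 hnee (hF.2.2 w hwr0) with hf1 | hf2
      · have ha'S : a' ∈ ({r} : Set V) ∪ endpoints F :=
          Or.inr ⟨_, hf1, Sym2.mem_mk_right w a'⟩
        have h := hcon a' ha'S
        have hb := hG.dist_triangle (u := a') (v := b) (w := r)
        have hd := hG.dist_triangle (u := a') (v := d) (w := r)
        have hc2 : G.dist a' c = n := by omega
        exact ih a' ha' hc2 hla'
      · have hc'S : c' ∈ ({r} : Set V) ∪ endpoints F :=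
          Or.inr ⟨_, hf2, Sym2.mem_mk_right w c'⟩
        have h := hcon c' hc'S
        have hb := hG.dist_triangle (u := c') (v := b) (w := r)
        have hd := hG.dist_triangle (u := c') (v := d) (w := r)
        have ha2 : G.dist c' a = n := by omega
        exact ih c' ha2 hc' hlc'

private lemma climb_case [Fintype V] {G : SimpleGraph V} (hG : G.Connected)
    (hδ : ∀ v : V, 2 ≤ (G.neighborSet v).ncard) {r : V} {F : Set (Sym2 V)}
    (hF : IsGoodEdgeSet G r F) {a b c d : V}
    (hla : G.dist a r = G.dist b r + 1) (hlc : G.dist c r = G.dist d r + 1)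
    (hbd : G.dist b r = G.dist d r) (hac : a ≠ c)
    (hcon : ∀ s ∈ ({r} : Set V) ∪ endpoints F,
      min (G.dist s a) (G.dist s b) = min (G.dist s c) (G.dist s d)) :
    ∀ m, ∀ w : V, ∀ t : ℕ, Fintype.card V ≤ G.dist w r + m →
      G.dist w r = G.dist a r + t → G.dist w a = t → False := by
  intro m
  induction m with
  | zero =>
    intro w t hcard _ _
    have := dist_lt_card' hG w r
    omega
  | succ m ih =>
    intro w t hcard hwr hwa
    by_cases hwS : w ∈ ({r} : Set V) ∪ endpoints F
    · have h := hcon w hwS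
      have hb := hG.dist_triangle (u := w) (v := b) (w := r)
      have hd := hG.dist_triangle (u := w) (v := d) (w := r)
      have hc2 : G.dist w c = t := by omega
      exact descent_case hG hF hla hlc hbd hac hcon t w hwa hc2 hwr
    · have hwr0 : w ≠ r := by
        intro h
        rw [h, SimpleGraph.dist_self] at hwr
        omega
      obtain ⟨z, hz, hlz⟩ := up_neighbor hG hδ hF hwr0 hwS
      have h2 := hG.dist_triangle (u := z) (v := w) (w := a)
      have h3 := hG.dist_triangle (u := z) (v := a) (w := r)
      have hzw : G.dist z w = 1 := by
        rw [SimpleGraph.dist_comm]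
        exact SimpleGraph.dist_eq_one_iff_adj.mpr hz
      have hza : G.dist z a = t + 1 := by omega
      exact ih z (t + 1) (by omega) (by omega) hza

private lemma main_case [Fintype V] {G : SimpleGraph V} (hG : G.Connected)
    (hδ : ∀ v : V, 2 ≤ (G.neighborSet v).ncard) {r : V} {F : Set (Sym2 V)}
    (hF : IsGoodEdgeSet G r F) {a b c d : V} (hab : G.Adj a b) (hcd : G.Adj c d)
    (hba : G.dist b r ≤ G.dist a r) (hdc : G.dist d r ≤ G.dist c r)
    (hne : s(a, b) ≠ s(c, d))
    (hcon : ∀ s ∈ ({r} : Set V) ∪ endpoints F,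
      min (G.dist s a) (G.dist s b) = min (G.dist s c) (G.dist s d)) : False := by
  have hrS : r ∈ ({r} : Set V) ∪ endpoints F := Or.inl rfl
  have hr := hcon r hrS
  rw [SimpleGraph.dist_comm (u := r) (v := a), SimpleGraph.dist_comm (u := r) (v := b),
    SimpleGraph.dist_comm (u := r) (v := c), SimpleGraph.dist_comm (u := r) (v := d)] at hr
  have hab1 : G.dist a b = 1 := SimpleGraph.dist_eq_one_iff_adj.mpr hab
  have hcd1 : G.dist c d = 1 := SimpleGraph.dist_eq_one_iff_adj.mpr hcd
  have t1 := hG.dist_triangle (u := a) (v := b) (w := r)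
  have t3 := hG.dist_triangle (u := c) (v := d) (w := r)
  have hk : G.dist b r = G.dist d r := by omega
  by_cases hha : G.dist a r = G.dist b r
  · exact horiz_case hG hF hab hha hne hcon
  by_cases hhc : G.dist c r = G.dist d r
  · exact horiz_case hG hF hcd hhc (Ne.symm hne) (fun s hs => (hcon s hs).symm)
  have hla : G.dist a r = G.dist b r + 1 := by omega
  have hlc : G.dist c r = G.dist d r + 1 := by omega
  by_cases hac : a = c
  · subst hac
    have hbd2 : b ≠ d := fun h => hne (by rw [h])
    have har : a ≠ r := by
      intro h
      rw [h, SimpleGraph.dist_self] at hla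
      omega
    have m1 : s(a, b) ∈ brSet G r a := ⟨b, rfl, hab, hla⟩
    have m2 : s(a, d) ∈ brSet G r a := ⟨d, rfl, hcd, hlc⟩
    rcases mem_of_ncard_inter (Set.toFinite _) m1 m2 hne (hF.2.2 a har) with hf1 | hf2
    · have hbS : b ∈ ({r} : Set V) ∪ endpoints F :=
        Or.inr ⟨_, hf1, Sym2.mem_mk_right a b⟩
      exact resolve_min hG (Or.inr rfl) hab.ne' hbd2 (hcon b hbS)
    · have hdS : d ∈ ({r} : Set V) ∪ endpoints F :=
        Or.inr ⟨_, hf2, Sym2.mem_mk_right a d⟩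
      exact resolve_min hG (Or.inr rfl) hcd.ne' (Ne.symm hbd2) ((hcon d hdS).symm)
  · exact climb_case hG hδ hF hla hlc hk hac hcon (Fintype.card V) a 0
      (Nat.le_add_left _ _) (by omega) (SimpleGraph.dist_self (G := G) (v := a))

end StmtFiveAux

theorem stmt_5 [Fintype V] (G : SimpleGraph V) (hG : G.Connected)
    (hδ : ∀ v : V, 2 ≤ (G.neighborSet v).ncard) (r : V)
    (F : Set (Sym2 V)) (hF : IsGoodEdgeSet G r F) :
    IsEdgeResolving G ({r} ∪ endpoints F) := by
  rintro e he f hf hef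
  by_contra hcontra
  push_neg at hcontra
  induction e using Sym2.ind with
  | _ a b =>
  induction f using Sym2.ind with
  | _ c d =>
  rw [SimpleGraph.mem_edgeSet] at he hf
  have hcon : ∀ s ∈ ({r} : Set V) ∪ endpoints F,
      min (G.dist s a) (G.dist s b) = min (G.dist s c) (G.dist s d) := by
    intro s hs
    simpa [edgeDist] using hcontra s hs
  rcases le_total (G.dist b r) (G.dist a r) with h1 | h1 <;>
    rcases le_total (G.dist d r) (G.dist c r) with h2 | h2
  · exact main_case hG hδ hF he hf h1 h2 hef hcon
  · exact main_case hG hδ hF he hf.symm h1 h2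
      (fun h => hef (h.trans Sym2.eq_swap))
      (fun s hs => (hcon s hs).trans (min_comm _ _))
  · exact main_case hG hδ hF he.symm hf h1 h2
      (fun h => hef (Sym2.eq_swap.trans h))
      (fun s hs => (min_comm _ _).trans (hcon s hs))
  · exact main_case hG hδ hF he.symm hf.symm h1 h2
      (fun h => hef ((Sym2.eq_swap.trans h).trans Sym2.eq_swap))
      (fun s hs => ((min_comm _ _).trans (hcon s hs)).trans (min_comm _ _))
end

section
/- Let G be a connected graph with minimum degree at least 2. Then the metric dimension of G is at most 2·c(G) + 1, where c(G) is the cyclomatic number of G. Moreover, if G contains a cut-vertex, then the metric dimension of G is at most 2·c(G). -/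
open SimpleGraph

variable {V : Type*}

section AuxProofs

private lemma adj_dist_le' {V : Type*} {G : SimpleGraph V} (hG : G.Connected) (r : V)
    {a b : V} (h : G.Adj a b) : G.dist r a ≤ G.dist r b + 1 := by
  obtain ⟨p, hp⟩ := (hG.preconnected r b).exists_walk_length_eq_dist
  have := SimpleGraph.dist_le (p.concat h.symm)
  rwa [SimpleGraph.Walk.length_concat, hp] at this

private lemma brSet_upper' {V : Type*} {G : SimpleGraph V} {r u u' : V} {e : Sym2 V}
    (h : e ∈ brSet G r u) (h' : e ∈ brSet G r u') : u = u' := by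
  obtain ⟨v, rfl, hadj, hd⟩ := h
  obtain ⟨v', he, hadj', hd'⟩ := h'
  rw [Sym2.eq_iff] at he
  rcases he with ⟨h1, h2⟩ | ⟨h1, h2⟩
  · exact h1
  · subst h1; subst h2; exfalso; omega

private lemma construction' {V : Type*} [Fintype V] (G : SimpleGraph V) (hG : G.Connected)
    (hd2 : ∀ v : V, 2 ≤ (G.neighborSet v).ncard) (r : V) :
    ∃ S₀ : Set V, S₀.ncard ≤ 2 * cyclomatic G ∧
      (∀ x y : V, x ≠ y → G.dist r x = G.dist r y →
        (∀ s ∈ S₀, G.dist s x = G.dist s y) → False) ∧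
      (∀ u : V, ∃ s ∈ S₀, ∃ p : G.Walk s u,
        p.length + G.dist r u = G.dist r s ∧ ∀ w ∈ p.support, G.dist r u ≤ G.dist r w) := by
  classical
  -- every vertex other than r has a "down" neighbour
  have hdn : ∀ u : V, u ≠ r → ∃ v : V, G.Adj u v ∧ G.dist r u = G.dist r v + 1 := by
    intro u hu
    obtain ⟨p, hp⟩ := (hG.preconnected u r).exists_walk_length_eq_dist
    cases p with
    | nil => exact absurd rfl hu
    | @cons _ v _ h q =>
      have h1 : G.dist v r ≤ q.length := SimpleGraph.dist_le q
      have h2 : G.dist u r = q.length + 1 := by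
        rw [← hp, SimpleGraph.Walk.length_cons]
      have h3 : G.dist r u ≤ G.dist r v + 1 := adj_dist_le' hG r h
      refine ⟨v, h, ?_⟩
      rw [SimpleGraph.dist_comm (u := r) (v := u), SimpleGraph.dist_comm (u := r) (v := v)]
      rw [SimpleGraph.dist_comm (u := r) (v := u), SimpleGraph.dist_comm (u := r) (v := v)] at h3
      omega
  choose dw hdw1 hdw2 using hdn
  set ew : V → Sym2 V := fun u => if h : u = r then s(u, u) else s(u, dw u h) with hew_def
  have hew_br : ∀ u (hu : u ≠ r), ew u ∈ brSet G r u := by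
    intro u hu
    simp only [hew_def, dif_neg hu]
    refine ⟨dw u hu, rfl, hdw1 u hu, ?_⟩
    rw [SimpleGraph.dist_comm (u := u) (v := r), SimpleGraph.dist_comm (u := dw u hu) (v := r)]
    exact hdw2 u hu
  set F : Set (Sym2 V) := {e | (∃ a b : V, e = s(a, b) ∧ G.Adj a b ∧ G.dist r a = G.dist r b) ∨
    (∃ u : V, u ≠ r ∧ e ∈ brSet G r u ∧ e ≠ ew u)} with hF_def
  set S₀ := endpoints F with hS₀_def
  have hFe : F ⊆ G.edgeSet := by
    rintro e (⟨a, b, rfl, hab, -⟩ | ⟨u, -, ⟨v, rfl, huv, -⟩, -⟩)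
    · exact hab
    · exact huv
  have hhor : ∀ a b : V, G.Adj a b → G.dist r a = G.dist r b → a ∈ S₀ :=
    fun a b hab hd => ⟨s(a, b), Or.inl ⟨a, b, rfl, hab, hd⟩, Sym2.mem_mk_left a b⟩
  have hbrF : ∀ u, u ≠ r → ∀ e ∈ brSet G r u, e ≠ ew u → e ∈ F :=
    fun u hu e he hne => Or.inr ⟨u, hu, he, hne⟩
  have hewF : ∀ u, u ≠ r → ew u ∉ F := by
    intro u hu hmem
    obtain ⟨v, hv, hadj, hdist⟩ := hew_br u hu
    rcases hmem with ⟨a, b, heq, hab, hdd⟩ | ⟨u', hu', he', hne⟩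
    · rw [hv, Sym2.eq_iff] at heq
      rw [SimpleGraph.dist_comm (u := u) (v := r), SimpleGraph.dist_comm (u := v) (v := r)] at hdist
      rcases heq with ⟨h1, h2⟩ | ⟨h1, h2⟩ <;> · subst h1; subst h2; omega
    · have := brSet_upper' (hew_br u hu) he'
      subst this
      exact hne rfl
  have hn1 : 0 < Fintype.card V := Fintype.card_pos_iff.mpr hG.nonempty
  have hinj : Set.InjOn ew {u : V | u ≠ r} := by
    intro a ha b hb hab
    exact brSet_upper' (hew_br a ha) (hab ▸ hew_br b hb)
  have himgsub : ew '' {u : V | u ≠ r} ⊆ G.edgeSet \ F := by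
    rintro e ⟨u, hu, rfl⟩
    refine ⟨?_, hewF u hu⟩
    obtain ⟨v, hv, hadj, -⟩ := hew_br u hu
    rw [hv]
    exact hadj
  have hcardV : ({u : V | u ≠ r}).ncard = Fintype.card V - 1 := by
    have he : {u : V | u ≠ r} = Set.univ \ {r} := by ext; simp
    rw [he, Set.ncard_diff (Set.subset_univ _), Set.ncard_univ, Set.ncard_singleton,
      Nat.card_eq_fintype_card]
  have hFcard : F.ncard ≤ cyclomatic G := by
    have h1 := Set.ncard_diff_add_ncard_of_subset hFe (Set.toFinite _)
    have h2 : (ew '' {u : V | u ≠ r}).ncard ≤ (G.edgeSet \ F).ncard :=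
      Set.ncard_le_ncard himgsub (Set.toFinite _)
    rw [Set.ncard_image_of_injOn hinj, hcardV] at h2
    unfold cyclomatic
    omega
  have hS₀card : S₀.ncard ≤ 2 * cyclomatic G := by
    set Ff := F.toFinset with hFf
    have hsub : S₀ ⊆ ↑(Ff.biUnion fun e => Finset.univ.filter (· ∈ e)) := by
      rintro v ⟨e, heF, hv⟩
      simp only [Finset.coe_biUnion, Set.mem_iUnion, Finset.mem_coe, Finset.mem_biUnion,
        Finset.mem_filter, Finset.mem_univ, true_and, hFf, Set.mem_toFinset]
      exact ⟨e, heF, hv⟩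
    have h1 : S₀.ncard ≤ (Ff.biUnion fun e => Finset.univ.filter (· ∈ e)).card := by
      have := Set.ncard_le_ncard hsub (Set.toFinite _)
      rwa [Set.ncard_coe_finset] at this
    have h2 : ∀ e : Sym2 V, (Finset.univ.filter (· ∈ e)).card ≤ 2 := by
      intro e
      induction e using Sym2.ind with
      | _ a b =>
        have hsub2 : Finset.univ.filter (· ∈ s(a, b)) ⊆ {a, b} := by
          intro x hx
          simp only [Finset.mem_filter, Finset.mem_univ, true_and, Sym2.mem_iff] at hx
          simpa using hx
        calc (Finset.univ.filter (· ∈ s(a, b))).card ≤ ({a, b} : Finset V).card :=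
              Finset.card_le_card hsub2
          _ ≤ 2 := (Finset.card_insert_le a {b}).trans (by simp)
    have h3 := Finset.card_biUnion_le (s := Ff) (t := fun e => Finset.univ.filter (· ∈ e))
    have h4 : ∑ e ∈ Ff, (Finset.univ.filter (· ∈ e)).card ≤ 2 * Ff.card :=
      calc ∑ e ∈ Ff, (Finset.univ.filter (· ∈ e)).card ≤ ∑ _e ∈ Ff, 2 :=
            Finset.sum_le_sum fun e _ => h2 e
        _ = 2 * Ff.card := by rw [Finset.sum_const, smul_eq_mul, mul_comm]
    have h5 : Ff.card = F.ncard := by rw [hFf, ← Set.ncard_eq_toFinset_card' F]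
    omega
  -- vertices outside S₀ have an "up" neighbour
  have hup : ∀ u : V, u ∉ S₀ → ∃ v, G.Adj u v ∧ G.dist r v = G.dist r u + 1 := by
    intro u hu
    by_cases hur : u = r
    · have h2 : 0 < (G.neighborSet u).ncard := by have := hd2 u; omega
      obtain ⟨v, hv⟩ := (Set.ncard_pos (Set.toFinite _)).1 h2
      have hadj : G.Adj u v := hv
      have hadj' : G.Adj r v := hur ▸ hadj
      have h1 : G.dist r v = 1 := SimpleGraph.dist_eq_one_iff_adj.2 hadj'
      refine ⟨v, hadj, ?_⟩
      rw [h1, hur, SimpleGraph.dist_self]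
    · by_contra hno
      push_neg at hno
      have hdownall : ∀ v, G.Adj u v → G.dist u r = G.dist v r + 1 := by
        intro v hv
        have l1 : G.dist r v ≤ G.dist r u + 1 := adj_dist_le' hG r hv.symm
        have l2 : G.dist r u ≤ G.dist r v + 1 := adj_dist_le' hG r hv
        have l3 : G.dist r v ≠ G.dist r u + 1 := hno v hv
        have l4 : G.dist r v ≠ G.dist r u := fun h => hu (hhor u v hv h.symm)
        rw [SimpleGraph.dist_comm (u := u) (v := r), SimpleGraph.dist_comm (u := v) (v := r)]
        omega
      obtain ⟨v₁, hv₁, v₂, hv₂, hvne⟩ :=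
        (Set.one_lt_ncard (s := G.neighborSet u) (Set.toFinite _)).1
        (by have := hd2 u; omega)
      have hv₁' : G.Adj u v₁ := hv₁
      have hv₂' : G.Adj u v₂ := hv₂
      have e₁ : s(u, v₁) ∈ brSet G r u := ⟨v₁, rfl, hv₁', hdownall v₁ hv₁'⟩
      have e₂ : s(u, v₂) ∈ brSet G r u := ⟨v₂, rfl, hv₂', hdownall v₂ hv₂'⟩
      have hne12 : s(u, v₁) ≠ s(u, v₂) := by
        intro hh
        rw [Sym2.eq_iff] at hh
        rcases hh with ⟨-, h⟩ | ⟨h, -⟩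
        · exact hvne h
        · exact hv₂'.ne h
      have hmem : s(u, v₁) ∈ F ∨ s(u, v₂) ∈ F := by
        by_cases hh : s(u, v₁) = ew u
        · exact Or.inr (hbrF u hur _ e₂ (by rw [← hh]; exact hne12.symm))
        · exact Or.inl (hbrF u hur _ e₁ hh)
      rcases hmem with h | h <;> exact hu ⟨_, h, Sym2.mem_mk_left u _⟩
  -- Lemma A : ascending to S₀
  have hA : ∀ u : V, ∃ s ∈ S₀, ∃ p : G.Walk s u,
      p.length + G.dist r u = G.dist r s ∧ ∀ w ∈ p.support, G.dist r u ≤ G.dist r w := by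
    have key : ∀ k : ℕ, ∀ u : V, Fintype.card V - G.dist r u ≤ k →
        ∃ s ∈ S₀, ∃ p : G.Walk s u,
          p.length + G.dist r u = G.dist r s ∧ ∀ w ∈ p.support, G.dist r u ≤ G.dist r w := by
      intro k
      induction k with
      | zero =>
        intro u hk
        exfalso
        obtain ⟨p, hp, hlen⟩ := hG.exists_path_of_dist r u
        have := hp.length_lt
        omega
      | succ k ih =>
        intro u hk
        by_cases hu : u ∈ S₀
        · refine ⟨u, hu, SimpleGraph.Walk.nil, by simp, ?_⟩
          intro w hw
          simp only [SimpleGraph.Walk.support_nil, List.mem_singleton] at hw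
          subst hw
          exact le_rfl
        · obtain ⟨v, huv, hv⟩ := hup u hu
          obtain ⟨s, hs, p, hp1, hp2⟩ := ih v (by omega)
          refine ⟨s, hs, p.concat huv.symm, ?_, ?_⟩
          · rw [SimpleGraph.Walk.length_concat]
            omega
          · intro w hw
            rw [SimpleGraph.Walk.support_concat] at hw
            rcases List.mem_append.1 hw with h | h
            · have := hp2 w h
              omega
            · rw [List.mem_singleton] at h
              subst h
              omega
    exact fun u => key (Fintype.card V) u (by omega)
  refine ⟨S₀, hS₀card, ?_, hA⟩
  -- the main resolving property
  intro x y hxy ha hres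
  have key : ∀ ℓ : ℕ, ∀ w : V, G.dist r w = G.dist r x + ℓ →
      G.dist w x = ℓ → G.dist w y = ℓ → False := by
    intro ℓ
    induction ℓ using Nat.strong_induction_on with
    | _ ℓ IH =>
      intro w h1 h2 h3
      cases ℓ with
      | zero =>
        have hwx : w = x := (hG.dist_eq_zero_iff).1 h2
        have hwy : w = y := (hG.dist_eq_zero_iff).1 h3
        exact hxy (hwx ▸ hwy)
      | succ m =>
        obtain ⟨p, hp⟩ := (hG.preconnected w x).exists_walk_length_eq_dist
        cases p with
        | nil => rw [SimpleGraph.dist_self] at h2; omega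
        | @cons _ p₁ _ hwp q =>
          rw [SimpleGraph.Walk.length_cons, h2] at hp
          have d1 : G.dist p₁ x ≤ m := by
            have := SimpleGraph.dist_le q
            omega
          have d2 : G.dist w x ≤ G.dist p₁ x + 1 := by
            rw [SimpleGraph.dist_comm (u := w) (v := x), SimpleGraph.dist_comm (u := p₁) (v := x)]
            exact adj_dist_le' hG x hwp
          have d3 : G.dist p₁ x = m := by omega
          have d4 : G.dist r p₁ = G.dist r x + m := by
            have u1 : G.dist r p₁ ≤ G.dist r x + G.dist x p₁ := hG.dist_triangle
            have u2 : G.dist r w ≤ G.dist r p₁ + 1 := adj_dist_le' hG r hwp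
            rw [SimpleGraph.dist_comm (u := x) (v := p₁)] at u1
            omega
          obtain ⟨p', hp'⟩ := (hG.preconnected w y).exists_walk_length_eq_dist
          cases p' with
          | nil => rw [SimpleGraph.dist_self] at h3; omega
          | @cons _ q₁ _ hwq q' =>
            rw [SimpleGraph.Walk.length_cons, h3] at hp'
            have d1' : G.dist q₁ y ≤ m := by
              have := SimpleGraph.dist_le q'
              omega
            have d2' : G.dist w y ≤ G.dist q₁ y + 1 := by
              rw [SimpleGraph.dist_comm (u := w) (v := y), SimpleGraph.dist_comm (u := q₁) (v := y)]
              exact adj_dist_le' hG y hwq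
            have d3' : G.dist q₁ y = m := by omega
            have d4' : G.dist r q₁ = G.dist r x + m := by
              have u1 : G.dist r q₁ ≤ G.dist r y + G.dist y q₁ := hG.dist_triangle
              have u2 : G.dist r w ≤ G.dist r q₁ + 1 := adj_dist_le' hG r hwq
              rw [SimpleGraph.dist_comm (u := y) (v := q₁)] at u1
              omega
            by_cases hpq : p₁ = q₁
            · exact IH m (Nat.lt_succ_self m) p₁ d4 d3 (hpq ▸ d3')
            · have hw_ne_r : w ≠ r := by
                intro hwr
                rw [hwr, SimpleGraph.dist_self] at h1
                omega
              have ebr1 : s(w, p₁) ∈ brSet G r w := by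
                refine ⟨p₁, rfl, hwp, ?_⟩
                rw [SimpleGraph.dist_comm (u := w) (v := r), SimpleGraph.dist_comm (u := p₁) (v := r)]
                omega
              have ebr2 : s(w, q₁) ∈ brSet G r w := by
                refine ⟨q₁, rfl, hwq, ?_⟩
                rw [SimpleGraph.dist_comm (u := w) (v := r), SimpleGraph.dist_comm (u := q₁) (v := r)]
                omega
              have hne : s(w, p₁) ≠ s(w, q₁) := by
                intro hh
                rw [Sym2.eq_iff] at hh
                rcases hh with ⟨-, h⟩ | ⟨h, -⟩
                · exact hpq h
                · exact hwq.ne h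
              have hS : p₁ ∈ S₀ ∨ q₁ ∈ S₀ := by
                by_cases hh : s(w, p₁) = ew w
                · exact Or.inr ⟨s(w, q₁), hbrF w hw_ne_r _ ebr2 (by rw [← hh]; exact hne.symm),
                    Sym2.mem_iff.2 (Or.inr rfl)⟩
                · exact Or.inl ⟨s(w, p₁), hbrF w hw_ne_r _ ebr1 hh,
                    Sym2.mem_iff.2 (Or.inr rfl)⟩
              rcases hS with hs | hs
              · have := hres p₁ hs
                exact IH m (Nat.lt_succ_self m) p₁ d4 d3 (by omega)
              · have := hres q₁ hs
                exact IH m (Nat.lt_succ_self m) q₁ d4' (by omega) d3'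
  obtain ⟨s, hs, p, hp1, hp2⟩ := hA x
  have t1 : G.dist s x ≤ p.length := SimpleGraph.dist_le p
  have t2 : G.dist r s ≤ G.dist r x + G.dist x s := hG.dist_triangle
  rw [SimpleGraph.dist_comm (u := x) (v := s)] at t2
  have hsx : G.dist s x = p.length := by omega
  exact key (G.dist s x) s (by omega) rfl ((hres s hs).symm)

end AuxProofs

theorem stmt_9 [Fintype V] (G : SimpleGraph V) (hG : G.Connected)
    (hδ : ∀ v : V, 2 ≤ (G.neighborSet v).ncard) :
    metricDim G ≤ 2 * cyclomatic G + 1 ∧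
    ((∃ v : V, IsCutVertex G v) → metricDim G ≤ 2 * cyclomatic G) := by
  classical
  have hn1 : 0 < Fintype.card V := Fintype.card_pos_iff.mpr hG.nonempty
  constructor
  · obtain ⟨r⟩ := hG.nonempty
    obtain ⟨S₀, hcard, hP2, hA⟩ := construction' G hG hδ r
    have hres : IsResolving G (insert r S₀) := by
      intro x y hxy
      by_contra hcon
      push_neg at hcon
      have ha : G.dist r x = G.dist r y := hcon r (Set.mem_insert _ _)
      exact hP2 x y hxy ha fun s hs => hcon s (Set.mem_insert_of_mem _ hs)
    have h1 : metricDim G ≤ (insert r S₀).ncard :=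
      Nat.sInf_le ⟨insert r S₀, hres, rfl⟩
    have h2 : (insert r S₀).ncard ≤ S₀.ncard + 1 := Set.ncard_insert_le _ _
    omega
  · rintro ⟨r, hr⟩
    obtain ⟨S₀, hcard, hP2, hA⟩ := construction' G hG hδ r
    set Avoid : V → V → Prop := fun a b => ∃ p : G.Walk a b, r ∉ p.support with hAvoid_def
    have hAsymm : ∀ {a b : V}, Avoid a b → Avoid b a := by
      rintro a b ⟨p, hp⟩
      exact ⟨p.reverse, by rwa [SimpleGraph.Walk.support_reverse, List.mem_reverse]⟩
    have hAtrans : ∀ {a b c : V}, Avoid a b → Avoid b c → Avoid a c := by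
      rintro a b c ⟨p, hp⟩ ⟨q, hq⟩
      refine ⟨p.append q, ?_⟩
      rw [SimpleGraph.Walk.support_append]
      intro hmem
      rcases List.mem_append.1 hmem with h | h
      · exact hp h
      · exact hq (List.mem_of_mem_tail h)
    -- a vertex distinct from r
    have hNEx : ∃ v : V, v ≠ r := by
      have h2 : 0 < (G.neighborSet r).ncard := by have := hδ r; omega
      obtain ⟨v, hv⟩ := (Set.ncard_pos (Set.toFinite _)).1 h2
      have : G.Adj r v := hv
      exact ⟨v, this.ne'⟩
    have hNE : Nonempty ({u : V | u ≠ r}) := by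
      obtain ⟨v, hv⟩ := hNEx
      exact ⟨⟨v, hv⟩⟩
    have hnc : ¬ (G.induce {u : V | u ≠ r}).Preconnected := by
      intro hpc
      exact hr ((SimpleGraph.connected_iff _).mpr ⟨hpc, hNE⟩)
    rw [SimpleGraph.Preconnected] at hnc
    push_neg at hnc
    obtain ⟨⟨b, hb⟩, ⟨c, hc⟩, hbc'⟩ := hnc
    have hlift : ∀ {a' b' : V} (p : G.Walk a' b'), (∀ w ∈ p.support, w ≠ r) →
        ∀ (ha' : a' ≠ r) (hb' : b' ≠ r),
          (G.induce {u : V | u ≠ r}).Reachable ⟨a', ha'⟩ ⟨b', hb'⟩ := by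
      intro a' b' p
      induction p with
      | nil =>
        intro _ ha' hb'
        exact SimpleGraph.Reachable.refl _
      | @cons a₀ v₀ b₀ h q ihq =>
        intro hsup ha' hb'
        have hv : v₀ ≠ r := hsup v₀ (by
          rw [SimpleGraph.Walk.support_cons]
          exact List.mem_cons_of_mem _ q.start_mem_support)
        refine SimpleGraph.Reachable.trans (SimpleGraph.Adj.reachable ?_)
          (ihq (fun w hw => hsup w (by
            rw [SimpleGraph.Walk.support_cons]
            exact List.mem_cons_of_mem _ hw)) hv hb')
        exact h
    have hbc : ¬ Avoid b c := by
      rintro ⟨p, hp⟩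
      exact hbc' (hlift p (fun w hw hwr => hp (hwr ▸ hw)) hb hc)
    have hsplit : ∀ a' b' : V, ¬ Avoid a' b' → G.dist a' b' = G.dist a' r + G.dist r b' := by
      intro a' b' hnav
      obtain ⟨p, hp⟩ := (hG.preconnected a' b').exists_walk_length_eq_dist
      have hrp : r ∈ p.support := by
        by_contra h
        exact hnav ⟨p, h⟩
      have hspec := p.take_spec hrp
      have hl : (p.takeUntil r hrp).length + (p.dropUntil r hrp).length = p.length := by
        conv_rhs => rw [← hspec]
        rw [SimpleGraph.Walk.length_append]
      have t1 : G.dist a' r ≤ (p.takeUntil r hrp).length := SimpleGraph.dist_le _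
      have t2 : G.dist r b' ≤ (p.dropUntil r hrp).length := SimpleGraph.dist_le _
      have t3 : G.dist a' b' ≤ G.dist a' r + G.dist r b' := hG.dist_triangle
      omega
    have hAvoidA : ∀ u : V, u ≠ r → ∃ s ∈ S₀, Avoid s u ∧
        G.dist r s = G.dist r u + G.dist s u := by
      intro u hu
      obtain ⟨s, hs, p, hp1, hp2⟩ := hA u
      have t1 : G.dist s u ≤ p.length := SimpleGraph.dist_le p
      have t2 : G.dist r s ≤ G.dist r u + G.dist u s := hG.dist_triangle
      rw [SimpleGraph.dist_comm (u := u) (v := s)] at t2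
      have hrpos : 0 < G.dist r u := hG.pos_dist_of_ne (Ne.symm hu)
      have hravoid : r ∉ p.support := by
        intro hmem
        have := hp2 r hmem
        rw [SimpleGraph.dist_self] at this
        omega
      exact ⟨s, hs, ⟨p, hravoid⟩, by omega⟩
    have hres : IsResolving G S₀ := by
      intro x y hxy
      by_contra hcon
      push_neg at hcon
      by_cases hxr : x = r
      · have hz : ∃ z : V, z ≠ r ∧ ¬ Avoid z y := by
          by_cases h1 : Avoid b y
          · exact ⟨c, hc, fun h2 => hbc (hAtrans h1 (hAsymm h2))⟩
          · exact ⟨b, hb, h1⟩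
        obtain ⟨z, hzr, hzy⟩ := hz
        obtain ⟨s, hsS, hsz, -⟩ := hAvoidA z hzr
        have hsy : ¬ Avoid s y := fun h => hzy (hAtrans (hAsymm hsz) h)
        have h1 := hsplit s y hsy
        have h0 := hcon s hsS
        rw [hxr] at h0
        have hy0 : G.dist r y = 0 := by omega
        exact hxy (hxr.trans ((hG.dist_eq_zero_iff).1 hy0))
      · by_cases hyr : y = r
        · have hz : ∃ z : V, z ≠ r ∧ ¬ Avoid z x := by
            by_cases h1 : Avoid b x
            · exact ⟨c, hc, fun h2 => hbc (hAtrans h1 (hAsymm h2))⟩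
            · exact ⟨b, hb, h1⟩
          obtain ⟨z, hzr, hzx⟩ := hz
          obtain ⟨s, hsS, hsz, -⟩ := hAvoidA z hzr
          have hsx : ¬ Avoid s x := fun h => hzx (hAtrans (hAsymm hsz) h)
          have h1 := hsplit s x hsx
          have h0 := hcon s hsS
          rw [hyr] at h0
          have hx0 : G.dist r x = 0 := by omega
          exact hxy ((((hG.dist_eq_zero_iff).1 hx0).symm).trans hyr.symm)
        · by_cases hxy2 : Avoid x y
          · have hz : ∃ z : V, z ≠ r ∧ ¬ Avoid z x ∧ ¬ Avoid z y := by
              by_cases h1 : Avoid b x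
              · refine ⟨c, hc, fun h2 => hbc (hAtrans h1 (hAsymm h2)),
                  fun h2 => hbc (hAtrans h1 (hAtrans hxy2 (hAsymm h2)))⟩
              · exact ⟨b, hb, h1, fun h2 => h1 (hAtrans h2 (hAsymm hxy2))⟩
            obtain ⟨z, hzr, hzx, hzy⟩ := hz
            obtain ⟨s, hsS, hsz, -⟩ := hAvoidA z hzr
            have h1 := hsplit s x (fun h => hzx (hAtrans (hAsymm hsz) h))
            have h2 := hsplit s y (fun h => hzy (hAtrans (hAsymm hsz) h))
            have h0 := hcon s hsS
            have ha : G.dist r x = G.dist r y := by omega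
            exact hP2 x y hxy ha hcon
          · obtain ⟨s, hsS, hsy, hdy⟩ := hAvoidA y hyr
            have hsx : ¬ Avoid s x := fun h => hxy2 (hAtrans (hAsymm h) hsy)
            have h1 := hsplit s x hsx
            have h0 := hcon s hsS
            have hdc : G.dist s r = G.dist r s := SimpleGraph.dist_comm (u := s) (v := r)
            have hx0 : G.dist r x = 0 := by omega
            exact hxr ((hG.dist_eq_zero_iff).1 hx0).symm
    have h1 : metricDim G ≤ S₀.ncard := Nat.sInf_le ⟨S₀, hres, rfl⟩
    omega
end
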